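/- arXiv:2512.21027 — 7 statements merged into one kernel-verified Lean document; each statement's English description precedes it below -/
import Mathlib

section
/- Let G be a finite simple graph and n ≥ 1 a natural number. Then C_G(n) = Σ_{(S,U)} (−1)^{|S|} · (n−1)^{|U|}, where the sum is over all pairs consisting of a subset S ⊆ E(G) together with a subset U of the set of connected components of the spanning subgraph (V, S). (This is the enhanced-state expansion C_G(q) = Σ_s (−1)^{e(s)} q^{j(s)} at q = n − 1, where an enhanced state s is a subgraph S with each component labeled 1 or x, j(s) is the number of x-labels, and e(s) = |S|.) -/
open Classical

/-- The number of proper `n`-colorings of the simple graph `G`. -/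
noncomputable def properCount (V : Type) [Fintype V] (G : SimpleGraph V) (n : ℕ) : ℕ :=
  Nat.card {σ : V → Fin n // ∀ u v : V, G.Adj u v → σ u ≠ σ v}

section Aux

open Finset

/-- Binomial-type identity: `∑_{t ⊆ s} x^{|t|} = (x+1)^{|s|}`. -/
lemma sum_powerset_pow_card {α : Type*} [DecidableEq α] (s : Finset α) (x : ℤ) :
    ∑ t ∈ s.powerset, x ^ t.card = (x + 1) ^ s.card := by
  induction s using Finset.induction_on with
  | empty => simp
  | @insert a s ha ih =>
    rw [Finset.sum_powerset_insert ha, Finset.card_insert_of_notMem ha, pow_succ, ← ih]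
    have : ∀ t ∈ s.powerset, x ^ (insert a t).card = x * x ^ t.card := by
      intro t ht
      rw [Finset.card_insert_of_notMem (fun h => ha (Finset.mem_powerset.mp ht h)), pow_succ]
      ring
    rw [Finset.sum_congr rfl this, ← Finset.mul_sum]
    ring

/-- Colorings constant on each component of a graph correspond to functions on components. -/
noncomputable def componentEquiv {V : Type} (H : SimpleGraph V) (n : ℕ) :
    {σ : V → Fin n // ∀ u v : V, H.Adj u v → σ u = σ v} ≃ (H.ConnectedComponent → Fin n) where
  toFun σ := Quot.lift σ.1 (by
    intro v w (h : H.Reachable v w)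
    obtain ⟨p⟩ := h
    induction p with
    | nil => rfl
    | cons hadj _ ih => exact (σ.2 _ _ hadj).trans ih)
  invFun f := ⟨fun v => f (H.connectedComponentMk v), by
    intro u v huv
    exact congrArg f (SimpleGraph.ConnectedComponent.connectedComponentMk_eq_of_adj huv)⟩
  left_inv σ := rfl
  right_inv f := by
    funext c
    induction c using SimpleGraph.ConnectedComponent.ind with
    | h v => rfl

end Aux

/-- Enhanced-state expansion of the chromatic evaluation:
`C_G(n) = Σ_{(S,U)} (−1)^{|S|} (n−1)^{|U|}`, where the sum is over all subsets
`S ⊆ E(G)` together with all subsets `U` of the set of connected components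
of the spanning subgraph `(V, S)`
(an enhanced state: the components in `U` are those labeled `x`). -/
theorem chromatic_enhanced_state_expansion (V : Type) [Fintype V] [DecidableEq V]
    (G : SimpleGraph V) [DecidableRel G.Adj] (n : ℕ) (hn : 1 ≤ n) :
    (properCount V G n : ℤ) =
      ∑ S ∈ G.edgeFinset.powerset,
        ∑ U ∈ (Finset.univ :
            Finset ((SimpleGraph.fromEdgeSet (↑S : Set (Sym2 V))).ConnectedComponent)).powerset,
          (-1) ^ S.card * ((n : ℤ) - 1) ^ U.card := by
  classical
  -- abbreviation for "σ is constant on every edge of S"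
  set Bad : (V → Fin n) → Finset (Sym2 V) := fun σ =>
    G.edgeFinset.filter (fun e => ∀ a b : V, s(a, b) = e → σ a = σ b) with hBad
  -- Step 1: inner sum equals n ^ (number of components)
  have step1 : ∀ S ∈ G.edgeFinset.powerset,
      (∑ U ∈ (Finset.univ :
          Finset ((SimpleGraph.fromEdgeSet (↑S : Set (Sym2 V))).ConnectedComponent)).powerset,
        (-1 : ℤ) ^ S.card * ((n : ℤ) - 1) ^ U.card)
      = (-1 : ℤ) ^ S.card *
          (Finset.univ.filter (fun σ : V → Fin n =>
            ∀ u v : V, (SimpleGraph.fromEdgeSet (↑S : Set (Sym2 V))).Adj u v →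
              σ u = σ v)).card := by
    intro S hS
    rw [← Finset.mul_sum, sum_powerset_pow_card, sub_add_cancel, Finset.card_univ]
    congr 2
    have hcard : (Finset.univ.filter (fun σ : V → Fin n =>
        ∀ u v : V, (SimpleGraph.fromEdgeSet (↑S : Set (Sym2 V))).Adj u v → σ u = σ v)).card
        = Fintype.card {σ : V → Fin n //
            ∀ u v : V, (SimpleGraph.fromEdgeSet (↑S : Set (Sym2 V))).Adj u v → σ u = σ v} :=
      (Fintype.card_subtype _).symm
    rw [hcard, Fintype.card_congr (componentEquiv _ n), Fintype.card_fun, Fintype.card_fin]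
    push_cast
    ring
  rw [Finset.sum_congr rfl step1]
  -- Step 2: for S ⊆ E(G), the constancy condition is S ⊆ Bad σ
  have step2 : ∀ S ∈ G.edgeFinset.powerset, ∀ σ : V → Fin n,
      (∀ u v : V, (SimpleGraph.fromEdgeSet (↑S : Set (Sym2 V))).Adj u v → σ u = σ v)
        ↔ S ⊆ Bad σ := by
    intro S hS σ
    rw [Finset.mem_powerset] at hS
    constructor
    · intro h e he
      rw [hBad, Finset.mem_filter]
      refine ⟨hS he, ?_⟩
      intro a b hab
      by_cases hab' : a = b
      · rw [hab']
      · exact h a b (by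
          rw [SimpleGraph.fromEdgeSet_adj]
          exact ⟨by rw [hab]; exact_mod_cast he, hab'⟩)
    · intro h u v huv
      rw [SimpleGraph.fromEdgeSet_adj] at huv
      have : s(u, v) ∈ Bad σ := h (by exact_mod_cast huv.1)
      rw [hBad, Finset.mem_filter] at this
      exact this.2 u v rfl
  -- Step 3: exchange the order of summation and apply inclusion–exclusion
  have hBadSub : ∀ σ : V → Fin n, Bad σ ⊆ G.edgeFinset := fun σ => Finset.filter_subset _ _
  have key : ∑ S ∈ G.edgeFinset.powerset,
      (-1 : ℤ) ^ S.card *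
        (Finset.univ.filter (fun σ : V → Fin n =>
          ∀ u v : V, (SimpleGraph.fromEdgeSet (↑S : Set (Sym2 V))).Adj u v →
            σ u = σ v)).card
      = ∑ σ : V → Fin n, ∑ S ∈ (Bad σ).powerset, (-1 : ℤ) ^ S.card := by
    have : ∀ S ∈ G.edgeFinset.powerset,
        (-1 : ℤ) ^ S.card *
          (Finset.univ.filter (fun σ : V → Fin n =>
            ∀ u v : V, (SimpleGraph.fromEdgeSet (↑S : Set (Sym2 V))).Adj u v →
              σ u = σ v)).card
        = ∑ σ : V → Fin n, if S ⊆ Bad σ then (-1 : ℤ) ^ S.card else 0 := by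
      intro S hS
      rw [Finset.sum_ite, Finset.sum_const_zero, add_zero, Finset.sum_const, nsmul_eq_mul,
        mul_comm]
      congr 2
      exact congrArg Finset.card (Finset.filter_congr (fun σ _ => step2 S hS σ))
    rw [Finset.sum_congr rfl this, Finset.sum_comm]
    refine Finset.sum_congr rfl fun σ _ => ?_
    rw [← Finset.sum_filter]
    congr 1
    ext S
    simp only [Finset.mem_filter, Finset.mem_powerset]
    exact ⟨fun h => h.2, fun h => ⟨h.trans (hBadSub σ), h⟩⟩
  rw [key]
  -- Step 4: inclusion–exclusion collapses to counting proper colorings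
  have step4 : ∀ σ : V → Fin n,
      (∑ S ∈ (Bad σ).powerset, (-1 : ℤ) ^ S.card)
        = if Bad σ = ∅ then (1 : ℤ) else 0 :=
    fun σ => Finset.sum_powerset_neg_one_pow_card
  rw [Finset.sum_congr rfl (fun σ _ => step4 σ)]
  -- Step 5: `Bad σ = ∅` iff `σ` is a proper coloring
  have step5 : ∀ σ : V → Fin n,
      Bad σ = ∅ ↔ ∀ u v : V, G.Adj u v → σ u ≠ σ v := by
    intro σ
    constructor
    · intro h u v huv hc
      have : s(u, v) ∈ Bad σ := by
        rw [hBad, Finset.mem_filter]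
        refine ⟨by rwa [SimpleGraph.mem_edgeFinset, SimpleGraph.mem_edgeSet], ?_⟩
        intro a b hab
        rcases Sym2.eq_iff.mp hab with ⟨ha, hb⟩ | ⟨ha, hb⟩
        · rw [ha, hb]; exact hc
        · rw [ha, hb]; exact hc.symm
      rw [h] at this
      exact absurd this (Finset.notMem_empty _)
    · intro h
      rw [Finset.eq_empty_iff_forall_notMem]
      intro e he
      rw [hBad, Finset.mem_filter] at he
      obtain ⟨he1, he2⟩ := he
      induction e with
      | h a b =>
        rw [SimpleGraph.mem_edgeFinset, SimpleGraph.mem_edgeSet] at he1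
        exact h a b he1 (he2 a b rfl)
  -- Conclude
  have hcongr : ∀ σ : V → Fin n, (if Bad σ = ∅ then (1 : ℤ) else 0)
      = if (∀ u v : V, G.Adj u v → σ u ≠ σ v) then (1 : ℤ) else 0 := by
    intro σ
    exact if_congr (step5 σ) rfl rfl
  rw [Finset.sum_congr rfl (fun σ _ => hcongr σ), Finset.sum_ite, Finset.sum_const_zero,
    add_zero, Finset.sum_const, nsmul_eq_mul, mul_one]
  congr 1
  rw [properCount, Nat.card_eq_fintype_card, Fintype.card_subtype]
end

section
/- Let G be a finite simple graph and n ≥ 1 a natural number. Then C_G(n) = Σ_{j ≥ 0} (n−1)^j · χ^j(G), where χ^j(G) := Σ_{S ⊆ E(G)} (−1)^{|S|} · C(c(S), j) is the Euler characteristic of the j-graded part of the chromatic chain complex of G, computed at chain level (C(m, j) denotes the binomial coefficient). In other words, the coefficients of the chromatic polynomial C_G(q) in the variable q = λ − 1 are Euler characteristics of the graded pieces of the chromatic complex. -/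
open Finset SimpleGraph

/-- The number of connected components of the spanning subgraph `(V, S)`. -/
noncomputable def comps (V : Type) [Fintype V] (S : Finset (Sym2 V)) : ℕ :=
  Nat.card (SimpleGraph.fromEdgeSet (↑S : Set (Sym2 V))).ConnectedComponent

lemma key_reach {V : Type} {n : ℕ} (g : SimpleGraph V) (σ : V → Fin n)
    (h : ∀ u v, g.Adj u v → σ u = σ v) : ∀ u v, g.Reachable u v → σ u = σ v := by
  intro u v ⟨p⟩
  induction p with
  | nil => rfl
  | cons hadj p ih => exact (h _ _ hadj).trans ih

lemma card_const_on (V : Type) [Fintype V] (S : Finset (Sym2 V)) (n : ℕ) :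
    Nat.card {σ : V → Fin n //
      ∀ u v, (SimpleGraph.fromEdgeSet (↑S : Set (Sym2 V))).Adj u v → σ u = σ v}
      = n ^ comps V S := by
  set g := SimpleGraph.fromEdgeSet (↑S : Set (Sym2 V)) with hg
  have e : {σ : V → Fin n // ∀ u v, g.Adj u v → σ u = σ v}
      ≃ (g.ConnectedComponent → Fin n) :=
    { toFun := fun σ => Quot.lift σ.1 (fun u v h => key_reach g σ.1 σ.2 u v h)
      invFun := fun f => ⟨fun v => f (g.connectedComponentMk v),
        fun u v h => congrArg f (SimpleGraph.ConnectedComponent.sound h.reachable)⟩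
      left_inv := fun σ => Subtype.ext rfl
      right_inv := fun f => funext fun c => Quot.inductionOn c (fun v => rfl) }
  rw [Nat.card_congr e, Nat.card_fun, Nat.card_eq_fintype_card (α := Fin n),
    Fintype.card_fin, comps]

lemma comps_le (V : Type) [Fintype V] (S : Finset (Sym2 V)) :
    comps V S ≤ Fintype.card V := by
  have := Nat.card_le_card_of_surjective
    (SimpleGraph.fromEdgeSet (↑S : Set (Sym2 V))).connectedComponentMk
    (Quot.exists_rep)
  simpa [comps, Nat.card_eq_fintype_card] using this

lemma whitney (V : Type) [Fintype V] [DecidableEq V] (G : SimpleGraph V)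
    [DecidableRel G.Adj] (n : ℕ) :
    (properCount V G n : ℤ) =
      ∑ S ∈ G.edgeFinset.powerset, (-1) ^ S.card * (n : ℤ) ^ comps V S := by
  classical
  set Q : (V → Fin n) → Sym2 V → Prop :=
    fun σ e => ∀ u v : V, s(u, v) = e → σ u = σ v with hQ
  -- step 1: n ^ comps V S counts colorings monochromatic on S
  have h1 : ∀ S ∈ G.edgeFinset.powerset,
      ((-1 : ℤ)) ^ S.card * (n : ℤ) ^ comps V S
        = (-1) ^ S.card * ∑ σ : V → Fin n, (if ∀ e ∈ S, Q σ e then (1 : ℤ) else 0) := by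
    intro S _
    have hcard : (Finset.univ.filter (fun σ : V → Fin n => ∀ e ∈ S, Q σ e)).card
        = n ^ comps V S := by
      rw [← card_const_on V S n, Nat.card_eq_fintype_card, Fintype.card_subtype]
      congr 1
      ext σ
      simp only [Finset.mem_filter, Finset.mem_univ, true_and]
      constructor
      · intro hσ u v hadj
        rw [SimpleGraph.fromEdgeSet_adj] at hadj
        exact hσ _ hadj.1 u v rfl
      · intro hσ e he u v huv
        by_cases h : u = v
        · rw [h]
        · exact hσ u v (by rw [SimpleGraph.fromEdgeSet_adj]; exact ⟨huv ▸ he, h⟩)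
    rw [Finset.sum_boole, hcard]
    push_cast
    ring
  rw [Finset.sum_congr rfl h1]
  -- step 2: swap sums
  simp_rw [Finset.mul_sum]
  rw [Finset.sum_comm]
  -- step 3: inner sum is indicator of properness
  have h2 : ∀ σ : V → Fin n,
      (∑ S ∈ G.edgeFinset.powerset, (-1 : ℤ) ^ S.card * (if ∀ e ∈ S, Q σ e then (1:ℤ) else 0))
        = if (∀ u v : V, G.Adj u v → σ u ≠ σ v) then 1 else 0 := by
    intro σ
    set T : Finset (Sym2 V) := G.edgeFinset.filter (Q σ) with hT
    have hpow : G.edgeFinset.powerset.filter (fun S => ∀ e ∈ S, Q σ e) = T.powerset := by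
      ext S
      simp only [Finset.mem_filter, Finset.mem_powerset, hT, Finset.subset_iff,
        Finset.mem_filter]
      constructor
      · rintro ⟨ha, hb⟩ x hx
        exact ⟨ha hx, hb x hx⟩
      · intro h
        exact ⟨fun x hx => (h hx).1, fun x hx => (h hx).2⟩
    calc (∑ S ∈ G.edgeFinset.powerset, (-1 : ℤ) ^ S.card * (if ∀ e ∈ S, Q σ e then (1:ℤ) else 0))
        = ∑ S ∈ G.edgeFinset.powerset, (if ∀ e ∈ S, Q σ e then ((-1 : ℤ)) ^ S.card else 0) := by
          apply Finset.sum_congr rfl; intro S _; split <;> simp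
      _ = ∑ S ∈ T.powerset, (-1 : ℤ) ^ S.card := by
          rw [← Finset.sum_filter, hpow]
      _ = if T = ∅ then 1 else 0 := Finset.sum_powerset_neg_one_pow_card
      _ = if (∀ u v : V, G.Adj u v → σ u ≠ σ v) then 1 else 0 := by
          congr 1
          simp only [eq_iff_iff]
          constructor
          · intro hT0 u v hadj hcol
            have he : s(u, v) ∈ G.edgeFinset := by
              rw [SimpleGraph.mem_edgeFinset]; exact hadj
            have : s(u,v) ∈ T := by
              rw [hT, Finset.mem_filter]
              refine ⟨he, fun a b hab => ?_⟩
              rcases Sym2.eq_iff.mp hab with ⟨h1, h2⟩ | ⟨h1, h2⟩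
              · subst h1; subst h2; exact hcol
              · subst h1; subst h2; exact hcol.symm
            rw [hT0] at this
            exact absurd this (Finset.notMem_empty _)
          · intro hproper
            rw [hT, Finset.filter_eq_empty_iff]
            intro e he hQe
            rw [SimpleGraph.mem_edgeFinset] at he
            induction e using Sym2.ind with
            | _ u v =>
              exact hproper u v he (hQe u v rfl)
  rw [Finset.sum_congr rfl (fun σ _ => h2 σ), Finset.sum_boole]
  rw [properCount, Nat.card_eq_fintype_card, Fintype.card_subtype]

/-- `C_G(n) = Σ_{j ≥ 0} (n−1)^j χ^j(G)` where
`χ^j(G) = Σ_{S ⊆ E(G)} (−1)^{|S|} C(c(S), j)` is the chain-level Euler characteristic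
of the `j`-graded part of the chromatic chain complex.  (Since `c(S) ≤ |V|`, all terms
with `j > |V|` vanish, so the sum over `j` is taken up to `|V|`.) -/
theorem chromatic_graded_euler_char (V : Type) [Fintype V] [DecidableEq V]
    (G : SimpleGraph V) [DecidableRel G.Adj] (n : ℕ) (hn : 1 ≤ n) :
    (properCount V G n : ℤ) =
      ∑ j ∈ Finset.range (Fintype.card V + 1),
        ((n : ℤ) - 1) ^ j *
          ∑ S ∈ G.edgeFinset.powerset, (-1) ^ S.card * ((comps V S).choose j : ℤ) := by
  rw [whitney V G n]
  simp_rw [Finset.mul_sum]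
  rw [Finset.sum_comm]
  apply Finset.sum_congr rfl
  intro S _
  have hc : comps V S + 1 ≤ Fintype.card V + 1 := by
    exact Nat.succ_le_succ (comps_le V S)
  have hbin : ((n : ℤ)) ^ comps V S
      = ∑ j ∈ Finset.range (comps V S + 1), ((n:ℤ) - 1) ^ j * ((comps V S).choose j : ℤ) := by
    have := add_pow ((n : ℤ) - 1) 1 (comps V S)
    simpa using this
  have hext : ∑ j ∈ Finset.range (Fintype.card V + 1),
      ((n:ℤ) - 1) ^ j * ((comps V S).choose j : ℤ)
      = ∑ j ∈ Finset.range (comps V S + 1), ((n:ℤ) - 1) ^ j * ((comps V S).choose j : ℤ) := by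
    apply (Finset.sum_subset (Finset.range_subset_range.mpr hc) ?_).symm
    intro j _ hj
    rw [Finset.mem_range, not_lt] at hj
    rw [Nat.choose_eq_zero_of_lt (by omega)]
    simp
  calc (-1 : ℤ) ^ S.card * (n : ℤ) ^ comps V S
      = ∑ j ∈ Finset.range (comps V S + 1),
          (-1:ℤ) ^ S.card * (((n:ℤ) - 1) ^ j * ((comps V S).choose j : ℤ)) := by
        rw [hbin, Finset.mul_sum]
    _ = ∑ j ∈ Finset.range (Fintype.card V + 1),
          ((n:ℤ) - 1) ^ j * ((-1:ℤ) ^ S.card * ((comps V S).choose j : ℤ)) := by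
        rw [← Finset.mul_sum, ← hext, Finset.mul_sum]
        apply Finset.sum_congr rfl; intro j _; ring
end

section
/- Let G be a finite simple graph, n a natural number, R a commutative ring, and α ∈ R. Then Σ_{σ : V → {1,…,n}} α^{m(σ)} = Σ_{S ⊆ E(G)} (α − 1)^{|S|} · n^{c(S)}, where the left sum is over all n-colorings σ of G and m(σ) is the number of edges of G whose two endpoints receive the same color under σ. (This identifies the dichromatic polynomial Z_G(v, λ) at λ = n and v = α − 1 with the coloring partition sum Σ_σ Π_{⟨i,j⟩} α^{δ(σ(i),σ(j))}.) -/
/-- `m(σ)`: the number of edges of `G` whose two endpoints receive the same color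
under the coloring `σ`. -/
def improperEdges {V : Type} [Fintype V] [DecidableEq V] (G : SimpleGraph V)
    [DecidableRel G.Adj] {n : ℕ} (σ : V → Fin n) : ℕ :=
  (G.edgeFinset.filter fun e => (Sym2.map σ e).IsDiag).card

section aux
set_option linter.unusedSectionVars false
variable {V : Type} [Fintype V] [DecidableEq V] {n : ℕ}

lemma const_on_reachable (S : Finset (Sym2 V)) (σ : V → Fin n)
    (h : ∀ e ∈ S, (Sym2.map σ e).IsDiag) {u v : V}
    (hr : (SimpleGraph.fromEdgeSet (↑S : Set (Sym2 V))).Reachable u v) : σ u = σ v := by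
  obtain ⟨p⟩ := hr
  induction p with
  | nil => rfl
  | cons ha p ih =>
      rw [SimpleGraph.fromEdgeSet_adj] at ha
      have := h _ ha.1
      simp [Sym2.map_pair_eq, Sym2.isDiag_iff_proj_eq] at this
      exact this.trans ih

noncomputable def colorEquiv (S : Finset (Sym2 V)) :
    {σ : V → Fin n // ∀ e ∈ S, (Sym2.map σ e).IsDiag} ≃
      ((SimpleGraph.fromEdgeSet (↑S : Set (Sym2 V))).ConnectedComponent → Fin n) where
  toFun σ := SimpleGraph.ConnectedComponent.lift σ.1
    (fun v w p _ => const_on_reachable S σ.1 σ.2 ⟨p⟩)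
  invFun f := ⟨fun v => f ((SimpleGraph.fromEdgeSet (↑S : Set (Sym2 V))).connectedComponentMk v),
    by
      intro e he
      induction e with
      | _ u v =>
        by_cases huv : u = v
        · simp [huv]
        · have ha : (SimpleGraph.fromEdgeSet (↑S : Set (Sym2 V))).Adj u v := by
            rw [SimpleGraph.fromEdgeSet_adj]; exact ⟨he, huv⟩
          simp [Sym2.map_pair_eq, Sym2.isDiag_iff_proj_eq,
            SimpleGraph.ConnectedComponent.sound ha.reachable]⟩
  left_inv σ := by ext v; rfl
  right_inv f := by
    ext c
    induction c using SimpleGraph.ConnectedComponent.ind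
    rfl

lemma count_colorings (S : Finset (Sym2 V)) :
    (Finset.univ.filter fun σ : V → Fin n => ∀ e ∈ S, (Sym2.map σ e).IsDiag).card
      = n ^ comps V S := by
  rw [← Fintype.card_subtype]
  rw [← Nat.card_eq_fintype_card, Nat.card_congr (colorEquiv S), Nat.card_fun]
  simp [comps]

end aux

/-- The dichromatic polynomial at `λ = n`, `v = α − 1` equals the coloring partition sum:
`Σ_σ α^{m(σ)} = Σ_{S ⊆ E(G)} (α − 1)^{|S|} n^{c(S)}` in any commutative ring. -/
theorem dichromatic_coloring_partition_sum (V : Type) [Fintype V] [DecidableEq V]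
    (G : SimpleGraph V) [DecidableRel G.Adj] (n : ℕ) (R : Type) [CommRing R] (α : R) :
    ∑ σ : V → Fin n, α ^ improperEdges G σ =
      ∑ S ∈ G.edgeFinset.powerset, (α - 1) ^ S.card * (n : R) ^ comps V S := by
  have step1 : ∀ σ : V → Fin n, α ^ improperEdges G σ =
      ∏ e ∈ G.edgeFinset, ((if (Sym2.map σ e).IsDiag then α - 1 else 0) + 1) := by
    intro σ
    rw [improperEdges]
    rw [show (∏ e ∈ G.edgeFinset, ((if (Sym2.map σ e).IsDiag then α - 1 else 0) + 1)) =
        ∏ e ∈ G.edgeFinset, (if (Sym2.map σ e).IsDiag then α else 1) from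
      Finset.prod_congr rfl fun e _ => by split_ifs <;> ring]
    rw [Finset.prod_ite, Finset.prod_const, Finset.prod_const, one_pow, mul_one]
  calc ∑ σ : V → Fin n, α ^ improperEdges G σ
      = ∑ σ : V → Fin n, ∑ S ∈ G.edgeFinset.powerset,
          ∏ e ∈ S, (if (Sym2.map σ e).IsDiag then α - 1 else 0) := by
        refine Finset.sum_congr rfl fun σ _ => ?_
        rw [step1 σ, Finset.prod_add]
        exact Finset.sum_congr rfl fun S _ => by simp
    _ = ∑ S ∈ G.edgeFinset.powerset, ∑ σ : V → Fin n,
          ∏ e ∈ S, (if (Sym2.map σ e).IsDiag then α - 1 else 0) := Finset.sum_comm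
    _ = ∑ S ∈ G.edgeFinset.powerset, (α - 1) ^ S.card * (n : R) ^ comps V S := by
        refine Finset.sum_congr rfl fun S _ => ?_
        have : ∀ σ : V → Fin n, (∏ e ∈ S, (if (Sym2.map σ e).IsDiag then α - 1 else 0)) =
            if (∀ e ∈ S, (Sym2.map σ e).IsDiag) then (α - 1) ^ S.card else 0 := by
          intro σ
          by_cases h : ∀ e ∈ S, (Sym2.map σ e).IsDiag
          · rw [if_pos h, ← Finset.prod_const]
            exact Finset.prod_congr rfl fun e he => if_pos (h e he)
          · rw [if_neg h]
            push_neg at h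
            obtain ⟨e, he, hd⟩ := h
            exact Finset.prod_eq_zero he (if_neg hd)
        simp_rw [this]
        rw [Finset.sum_ite, Finset.sum_const, Finset.sum_const_zero, add_zero,
          nsmul_eq_mul, count_colorings]
        push_cast
        ring
end

section
/- Let G be a finite simple graph and n a natural number. Then, as an identity of polynomials in the variable α over ℤ (equivalently, for every α in any commutative ring), Σ_{S ⊆ E(G)} (α − 1)^{|S|} · n^{c(S)} = Σ_{i = 0}^{|E(G)|} α^i · C^i_G(n), where C^i_G(n) is the number of n-colorings of G with exactly i improper edges. In particular the dichromatic polynomial Z_G(α − 1, n) is the generating function of the impropriety coloring counts, and its constant term in α is the chromatic evaluation C^0_G(n) = C_G(n). -/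
/-- `C^i_G(n)`: the number of `n`-colorings of `G` with exactly `i` improper edges. -/
def improprietyCount {V : Type} [Fintype V] [DecidableEq V] (G : SimpleGraph V)
    [DecidableRel G.Adj] (n i : ℕ) : ℕ :=
  (Finset.univ.filter fun σ : V → Fin n => improperEdges G σ = i).card

open Finset

/-- binomial identity over powersets -/
lemma sum_pow_card_powerset {R : Type} [CommRing R] {β : Type} [DecidableEq β]
    (T : Finset β) (x : R) :
    ∑ S ∈ T.powerset, x ^ S.card = (x + 1) ^ T.card := by
  classical
  induction T using Finset.induction_on with
  | empty => simp
  | @insert a s ha ih =>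
    rw [Finset.sum_powerset_insert ha, ih, Finset.card_insert_of_notMem ha]
    have : ∑ t ∈ s.powerset, x ^ (insert a t).card
        = ∑ t ∈ s.powerset, x * x ^ t.card := by
      refine Finset.sum_congr rfl fun t ht => ?_
      rw [Finset.card_insert_of_notMem (fun h => ha (Finset.mem_powerset.1 ht h)), pow_succ']
    rw [this, ← Finset.mul_sum, ih, pow_succ]
    ring

/-- counting colorings monochromatic on all edges of `S` -/
lemma card_mono_colorings (V : Type) [Fintype V] [DecidableEq V] (n : ℕ)
    (S : Finset (Sym2 V)) :
    (Finset.univ.filter fun σ : V → Fin n => ∀ e ∈ S, (Sym2.map σ e).IsDiag).card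
      = n ^ comps V S := by
  classical
  set H := SimpleGraph.fromEdgeSet (↑S : Set (Sym2 V)) with hH
  have key : ∀ σ : V → Fin n,
      (∀ e ∈ S, (Sym2.map σ e).IsDiag) ↔ ∀ u v, H.Adj u v → σ u = σ v := by
    intro σ
    constructor
    · intro h u v huv
      rw [hH, SimpleGraph.fromEdgeSet_adj] at huv
      have := h _ huv.1
      rwa [Sym2.map_pair_eq, Sym2.mk_isDiag_iff] at this
    · intro h e he
      induction e with
      | _ u v =>
        rw [Sym2.map_pair_eq, Sym2.mk_isDiag_iff]
        by_cases huv : u = v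
        · rw [huv]
        · exact h u v (by rw [hH, SimpleGraph.fromEdgeSet_adj]; exact ⟨he, huv⟩)
    -- done
  letI : Fintype H.ConnectedComponent := Fintype.ofFinite _
  have hcard : (Finset.univ.filter fun σ : V → Fin n =>
      ∀ e ∈ S, (Sym2.map σ e).IsDiag).card
      = Fintype.card {σ : V → Fin n // ∀ u v, H.Adj u v → σ u = σ v} := by
    rw [Fintype.card_subtype]
    exact Finset.card_bij (fun σ _ => σ) (fun σ hσ => by
        simp only [Finset.mem_filter, Finset.mem_univ, true_and] at hσ ⊢
        exact (key σ).1 hσ)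
      (fun _ _ _ _ h => h)
      (fun σ hσ => ⟨σ, by
        simp only [Finset.mem_filter, Finset.mem_univ, true_and] at hσ ⊢
        exact (key σ).2 hσ, rfl⟩)
  rw [hcard]
  have e : {σ : V → Fin n // ∀ u v, H.Adj u v → σ u = σ v}
      ≃ (H.ConnectedComponent → Fin n) := by
    have walk_const : ∀ (σ : V → Fin n), (∀ u v, H.Adj u v → σ u = σ v) →
        ∀ {v w : V}, H.Walk v w → σ v = σ w := by
      intro σ hσ v w p
      induction p with
      | nil => rfl
      | cons h p ih => exact (hσ _ _ h).trans ih
    refine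
      { toFun := fun σ => SimpleGraph.ConnectedComponent.lift σ.1
          (fun v w p _ => walk_const σ.1 σ.2 p)
        invFun := fun f => ⟨fun v => f (H.connectedComponentMk v), ?_⟩
        left_inv := ?_
        right_inv := ?_ }
    · intro u v huv
      exact congrArg f (SimpleGraph.ConnectedComponent.sound huv.reachable)
    · intro σ; rfl
    · intro f
      funext c
      induction c using SimpleGraph.ConnectedComponent.ind with
      | _ v => rfl
  rw [Fintype.card_congr e, Fintype.card_fun, Fintype.card_fin, comps,
    Nat.card_eq_fintype_card]

/-- The dichromatic polynomial `Z_G(α − 1, n)` is the generating function of the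
impropriety coloring counts:
`Σ_{S ⊆ E(G)} (α − 1)^{|S|} n^{c(S)} = Σ_{i=0}^{|E(G)|} α^i C^i_G(n)`,
for every `α` in any commutative ring. -/
theorem dichromatic_eq_impropriety_generating_function (V : Type) [Fintype V] [DecidableEq V]
    (G : SimpleGraph V) [DecidableRel G.Adj] (n : ℕ) (R : Type) [CommRing R] (α : R) :
    ∑ S ∈ G.edgeFinset.powerset, (α - 1) ^ S.card * (n : R) ^ comps V S =
      ∑ i ∈ Finset.range (G.edgeFinset.card + 1), α ^ i * (improprietyCount G n i : R) := by
  classical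
  -- middle quantity: sum over colorings of α ^ (improperEdges σ)
  have lhs_eq : ∑ S ∈ G.edgeFinset.powerset, (α - 1) ^ S.card * (n : R) ^ comps V S
      = ∑ σ : V → Fin n, α ^ improperEdges G σ := by
    have step1 : ∀ S ∈ G.edgeFinset.powerset,
        (α - 1) ^ S.card * (n : R) ^ comps V S
        = ∑ σ ∈ Finset.univ.filter
            (fun σ : V → Fin n => ∀ e ∈ S, (Sym2.map σ e).IsDiag),
            (α - 1) ^ S.card := by
      intro S _
      rw [Finset.sum_const, nsmul_eq_mul, card_mono_colorings, mul_comm]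
      push_cast
      ring
    rw [Finset.sum_congr rfl step1]
    have step2 : ∀ S ∈ G.edgeFinset.powerset,
        (∑ σ ∈ Finset.univ.filter
            (fun σ : V → Fin n => ∀ e ∈ S, (Sym2.map σ e).IsDiag),
            (α - 1) ^ S.card)
        = ∑ σ : V → Fin n,
            if ∀ e ∈ S, (Sym2.map σ e).IsDiag then (α - 1) ^ S.card else 0 := by
      intro S _
      rw [Finset.sum_filter]
    rw [Finset.sum_congr rfl step2, Finset.sum_comm]
    refine Finset.sum_congr rfl fun σ _ => ?_
    -- inner sum over S ⊆ E equals sum over subsets of monochromatic edges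
    have hsub : (G.edgeFinset.filter fun e => (Sym2.map σ e).IsDiag).powerset
        ⊆ G.edgeFinset.powerset := by
      intro S hS
      rw [Finset.mem_powerset] at hS ⊢
      exact hS.trans (Finset.filter_subset _ _)
    rw [← Finset.sum_subset hsub (fun S hSE hSM => ?_), ]
    · have : ∀ S ∈ (G.edgeFinset.filter fun e => (Sym2.map σ e).IsDiag).powerset,
          (if ∀ e ∈ S, (Sym2.map σ e).IsDiag then (α - 1) ^ S.card else 0)
          = (α - 1) ^ S.card := by
        intro S hS
        rw [Finset.mem_powerset] at hS
        rw [if_pos]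
        intro e he
        exact (Finset.mem_filter.1 (hS he)).2
      rw [Finset.sum_congr rfl this, sum_pow_card_powerset, sub_add_cancel,
        improperEdges]
    · rw [if_neg]
      intro h
      apply hSM
      rw [Finset.mem_powerset] at hSE ⊢
      intro e he
      exact Finset.mem_filter.2 ⟨hSE he, h e he⟩
  have rhs_eq : ∑ i ∈ Finset.range (G.edgeFinset.card + 1),
        α ^ i * (improprietyCount G n i : R)
      = ∑ σ : V → Fin n, α ^ improperEdges G σ := by
    rw [← Finset.sum_fiberwise_of_maps_to
      (g := fun σ : V → Fin n => improperEdges G σ)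
      (fun σ _ => Finset.mem_range.2 (Nat.lt_succ_of_le (Finset.card_filter_le _ _)))]
    refine Finset.sum_congr rfl fun i _ => ?_
    rw [improprietyCount]
    rw [Finset.sum_congr rfl (fun σ hσ => by
      rw [(Finset.mem_filter.1 hσ).2])]
    rw [Finset.sum_const, nsmul_eq_mul, mul_comm]
  rw [lhs_eq, rhs_eq]
end

section
/- Let G be a finite simple graph, let e ∈ E(G) be an edge with endpoints u and v, let n be a natural number, R a commutative ring, and α ∈ R. Then Σ_{σ : V → {1,…,n}} α^{m_G(σ)} = Σ_{σ : V → {1,…,n}} α^{m_{G−e}(σ)} + (α − 1) · Σ_{σ : V → {1,…,n}, σ(u) = σ(v)} α^{m_{G−e}(σ)}, where m_H(σ) denotes the number of edges of the graph H whose two endpoints receive the same color under σ, and G−e is G with the edge e deleted. (This is the deletion–contraction identity Z_G = Z_{G−e} + (α − 1) Z_{G/e} for the dichromatic polynomial in the coloring formulation.) -/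
/-!
Deleting the edge `uv` lowers the number of monochromatic edges by one exactly for the
colorings with `σ u = σ v`, so `α ^ m_G(σ)` is `α * α ^ m_{G−e}(σ)` for those colorings and
`α ^ m_{G−e}(σ)` for all others. Writing `α = 1 + (α − 1)` and summing over `σ` gives the
identity.
-/

/-- `m_H(σ)`: the number of edges of the graph `H` whose two endpoints receive the
same color under the coloring `σ`. -/
noncomputable def mImp {V : Type} (H : SimpleGraph V) {n : ℕ} (σ : V → Fin n) : ℕ :=
  Nat.card {e : Sym2 V // e ∈ H.edgeSet ∧ (Sym2.map σ e).IsDiag}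

lemma mImp_eq_ncard {V : Type} (H : SimpleGraph V) {n : ℕ} (σ : V → Fin n) :
    mImp H σ = {e ∈ H.edgeSet | (Sym2.map σ e).IsDiag}.ncard :=
  Nat.card_coe_set_eq _

lemma mImp_eq_mImp_deleteEdges_add {V : Type} [Finite V] (G : SimpleGraph V) {e : Sym2 V}
    (he : e ∈ G.edgeSet) {n : ℕ} (σ : V → Fin n) :
    mImp G σ = mImp (G.deleteEdges {e}) σ + if (Sym2.map σ e).IsDiag then 1 else 0 := by
  have hdel : {f ∈ (G.deleteEdges {e}).edgeSet | (Sym2.map σ f).IsDiag}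
      = {f ∈ G.edgeSet | (Sym2.map σ f).IsDiag} \ {e} := by
    ext f
    simp only [SimpleGraph.edgeSet_deleteEdges, Set.mem_sdiff, Set.mem_ofPred_eq]
    tauto
  rw [mImp_eq_ncard, mImp_eq_ncard, hdel]
  split_ifs with hdiag
  · exact (Set.ncard_sdiff_singleton_add_one
      (s := {f ∈ G.edgeSet | (Sym2.map σ f).IsDiag}) ⟨he, hdiag⟩).symm
  · rw [Set.sdiff_singleton_eq_self fun h => hdiag h.2, add_zero]

lemma Finset.sum_ite_mul_eq_sum_add_sub_one_mul_sum_filter {ι R : Type} [Ring R]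
    (s : Finset ι) (p : ι → Prop) [DecidablePred p] (a : R) (f : ι → R) :
    ∑ i ∈ s, (if p i then a else 1) * f i =
      ∑ i ∈ s, f i + (a - 1) * ∑ i ∈ s.filter p, f i := by
  rw [Finset.sum_filter, Finset.mul_sum, ← Finset.sum_add_distrib]
  refine Finset.sum_congr rfl fun i _ => ?_
  split_ifs <;> noncomm_ring

/-- Deletion–contraction for the dichromatic polynomial in the coloring formulation:
`Σ_σ α^{m_G(σ)} = Σ_σ α^{m_{G−e}(σ)} + (α − 1) Σ_{σ : σ(u)=σ(v)} α^{m_{G−e}(σ)}`,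
where `e` is the edge of `G` with endpoints `u` and `v`. -/
theorem dichromatic_deletion_contraction (V : Type) [Fintype V] [DecidableEq V]
    (G : SimpleGraph V) (u v : V) (huv : G.Adj u v) (n : ℕ)
    (R : Type) [CommRing R] (α : R) :
    ∑ σ : V → Fin n, α ^ mImp G σ =
      (∑ σ : V → Fin n, α ^ mImp (G.deleteEdges {s(u, v)}) σ) +
        (α - 1) *
          ∑ σ ∈ Finset.univ.filter (fun σ : V → Fin n => σ u = σ v),
            α ^ mImp (G.deleteEdges {s(u, v)}) σ := by
  have hpow : ∀ σ : V → Fin n, α ^ mImp G σ =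
      (if σ u = σ v then α else 1) * α ^ mImp (G.deleteEdges {s(u, v)}) σ := by
    intro σ
    simp only [mImp_eq_mImp_deleteEdges_add G (G.mem_edgeSet.mpr huv) σ, Sym2.map_mk,
      Sym2.mk_isDiag_iff]
    split_ifs <;> ring
  simp_rw [hpow]
  exact Finset.sum_ite_mul_eq_sum_add_sub_one_mul_sum_filter _ _ _ _
end

section
/- (Temperley) Let G be a finite simple graph, n a natural number, and let k and T be real numbers with k·T ≠ 0. Define the Potts partition function Z_G(T) = Σ_{σ : V → {1,…,n}} exp(−E(σ)/(kT)), where the energy E(σ) = Σ_{uv ∈ E(G)} δ(σ(u), σ(v)) is the number of edges whose endpoints receive equal spins. Then Z_G(T) = Σ_{S ⊆ E(G)} (exp(−1/(kT)) − 1)^{|S|} · n^{c(S)}; that is, the Potts partition function equals the dichromatic polynomial Z_G(v, λ) of G evaluated at λ = n and v = exp(−1/(kT)) − 1. -/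
/-- The Potts energy `E(σ) = Σ_{uv ∈ E(G)} δ(σ(u), σ(v))`: the number of edges
whose endpoints receive equal spins under `σ`. -/
def pottsEnergy {V : Type} [Fintype V] [DecidableEq V] (G : SimpleGraph V)
    [DecidableRel G.Adj] {n : ℕ} (σ : V → Fin n) : ℕ :=
  ∑ e ∈ G.edgeFinset, if (Sym2.map σ e).IsDiag then 1 else 0

open Finset in
lemma card_colorings {V : Type} [Fintype V] [DecidableEq V]
    (G : SimpleGraph V) [DecidableRel G.Adj] (n : ℕ) (S : Finset (Sym2 V))
    (hS : S ⊆ G.edgeFinset) :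
    ((Finset.univ : Finset (V → Fin n)).filter
      (fun σ => ∀ e ∈ S, (Sym2.map σ e).IsDiag)).card = n ^ comps V S := by
  classical
  set H := SimpleGraph.fromEdgeSet (↑S : Set (Sym2 V)) with hH
  have hwalk : ∀ (σ : V → Fin n), (∀ e ∈ S, (Sym2.map σ e).IsDiag) →
      ∀ {u w : V}, H.Walk u w → σ u = σ w := by
    intro σ hσ u w p
    induction p with
    | nil => rfl
    | cons h p ih =>
      rename_i a b c
      have hadj : s(a, b) ∈ (↑S : Set (Sym2 V)) ∧ a ≠ b := by
        rwa [hH, SimpleGraph.fromEdgeSet_adj] at h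
      have hd := hσ _ (by exact_mod_cast hadj.1)
      rw [Sym2.map_pair_eq, Sym2.mk_isDiag_iff] at hd
      exact hd.trans ih
  have heq : {σ : V → Fin n // ∀ e ∈ S, (Sym2.map σ e).IsDiag}
      ≃ (H.ConnectedComponent → Fin n) := by
    refine
      { toFun := fun σ => SimpleGraph.ConnectedComponent.lift σ.1
          (fun u w p _ => hwalk σ.1 σ.2 p)
        invFun := fun g => ⟨fun v => g (H.connectedComponentMk v), ?_⟩
        left_inv := ?_
        right_inv := ?_ }
    · intro e he
      induction e with
      | h a b =>
        have hab : a ≠ b := by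
          have hm : s(a, b) ∈ G.edgeSet := by
            have := hS he
            rwa [SimpleGraph.mem_edgeFinset] at this
          intro hab'
          exact SimpleGraph.not_isDiag_of_mem_edgeSet G hm (by simp [hab'])
        have hadj : H.Adj a b := by
          rw [hH, SimpleGraph.fromEdgeSet_adj]
          exact ⟨by exact_mod_cast he, hab⟩
        have : H.connectedComponentMk a = H.connectedComponentMk b :=
          SimpleGraph.ConnectedComponent.sound hadj.reachable
        rw [Sym2.map_pair_eq, Sym2.mk_isDiag_iff]
        simp [this]
    · intro σ
      ext v
      simp
    · intro g
      funext c
      refine c.ind fun v => ?_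
      simp
  have hfin : Finite H.ConnectedComponent := by infer_instance
  rw [← Fintype.card_subtype, ← Nat.card_eq_fintype_card, Nat.card_congr heq,
    Nat.card_fun]
  simp [comps, hH, Nat.card_eq_fintype_card]

/-- (Temperley) The Potts partition function
`Z_G(T) = Σ_σ exp(−E(σ)/(kT))` equals the dichromatic polynomial of `G`
evaluated at `λ = n` and `v = exp(−1/(kT)) − 1`:
`Z_G(T) = Σ_{S ⊆ E(G)} (exp(−1/(kT)) − 1)^{|S|} n^{c(S)}`. -/
theorem potts_eq_dichromatic (V : Type) [Fintype V] [DecidableEq V]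
    (G : SimpleGraph V) [DecidableRel G.Adj] (n : ℕ) (k T : ℝ) (hkT : k * T ≠ 0) :
    ∑ σ : V → Fin n, Real.exp (-(pottsEnergy G σ : ℝ) / (k * T)) =
      ∑ S ∈ G.edgeFinset.powerset,
        (Real.exp (-1 / (k * T)) - 1) ^ S.card * (n : ℝ) ^ comps V S := by
  classical
  set v : ℝ := Real.exp (-1 / (k * T)) - 1 with hv
  have hexp : ∀ σ : V → Fin n,
      Real.exp (-(pottsEnergy G σ : ℝ) / (k * T)) =
        ∏ e ∈ G.edgeFinset, ((if (Sym2.map σ e).IsDiag then v else 0) + 1) := by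
    intro σ
    have h1 : -(pottsEnergy G σ : ℝ) / (k * T)
        = ∑ e ∈ G.edgeFinset,
            (if (Sym2.map σ e).IsDiag then -1 / (k * T) else (0 : ℝ)) := by
      have h2 : (pottsEnergy G σ : ℝ)
          = ∑ e ∈ G.edgeFinset, (if (Sym2.map σ e).IsDiag then (1 : ℝ) else 0) := by
        rw [pottsEnergy]
        push_cast
        rfl
      rw [h2, neg_div, Finset.sum_div, ← Finset.sum_neg_distrib]
      refine Finset.sum_congr rfl fun e _ => ?_
      split <;> ring
    rw [h1, Real.exp_sum]
    refine Finset.prod_congr rfl fun e _ => ?_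
    split
    · rw [hv]; ring_nf
    · simp
  calc
    ∑ σ : V → Fin n, Real.exp (-(pottsEnergy G σ : ℝ) / (k * T))
        = ∑ σ : V → Fin n, ∑ t ∈ G.edgeFinset.powerset,
            v ^ t.card * ∏ e ∈ t, (if (Sym2.map σ e).IsDiag then (1 : ℝ) else 0) := by
      refine Finset.sum_congr rfl fun σ _ => ?_
      rw [hexp σ, Finset.prod_add]
      refine Finset.sum_congr rfl fun t ht => ?_
      rw [Finset.prod_const_one, mul_one]
      have : ∀ e ∈ t, (if (Sym2.map σ e).IsDiag then v else (0:ℝ))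
          = v * (if (Sym2.map σ e).IsDiag then (1:ℝ) else 0) := by
        intro e _; split <;> ring
      rw [Finset.prod_congr rfl this, Finset.prod_mul_distrib, Finset.prod_const]
    _ = ∑ t ∈ G.edgeFinset.powerset, v ^ t.card *
          ∑ σ : V → Fin n, ∏ e ∈ t, (if (Sym2.map σ e).IsDiag then (1 : ℝ) else 0) := by
      rw [Finset.sum_comm]
      exact Finset.sum_congr rfl fun t _ => (Finset.mul_sum _ _ _).symm
    _ = ∑ S ∈ G.edgeFinset.powerset, v ^ S.card * (n : ℝ) ^ comps V S := by
      refine Finset.sum_congr rfl fun t ht => ?_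
      congr 1
      simp only [Finset.prod_boole]
      have key : (∑ x : V → Fin n, if ∀ i ∈ t, (Sym2.map x i).IsDiag then (1:ℝ) else 0)
          = (n:ℝ) ^ comps V t := by
        rw [Finset.sum_boole]
        exact_mod_cast congrArg (Nat.cast (R := ℝ))
          (card_colorings G n t (Finset.mem_powerset.mp ht))
      convert key using 2 with x
      congr
end

section
/- Let G_k be the path graph with k + 1 vertices and k edges (vertices 0, 1, …, k with an edge between consecutive vertices), let n ≥ 1 be a natural number, and let 0 ≤ l ≤ k. Then the number of n-colorings of G_k with exactly l improper edges is C^l_{G_k}(n) = C(k, l) · (n − 1)^{k − l} · n, where C(k, l) is the binomial coefficient. Consequently Σ_{l=0}^{k} Σ over colorings weighting each coloring by α^{(number of improper edges)} gives Z_{G_k}(α, n) = Σ_{l=0}^{k} C(k, l) (n − 1)^{k − l} n · α^l. -/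
open Finset Polynomial

theorem SimpleGraph.pathGraph_succ_edgeSet (k : ℕ) :
    (pathGraph (k + 1)).edgeSet = Set.range fun i : Fin k => s(i.castSucc, i.succ) := by
  ext e
  induction e using Sym2.ind with
  | _ u v =>
    simp only [mem_edgeSet, pathGraph_adj, Set.mem_range, Sym2.eq_iff, Fin.ext_iff,
      Fin.val_castSucc, Fin.val_succ]
    constructor
    · rintro (h | h)
      · exact ⟨⟨u, by omega⟩, .inl ⟨rfl, h⟩⟩
      · exact ⟨⟨v, by omega⟩, .inr ⟨rfl, h⟩⟩
    · rintro ⟨i, ⟨hu, hv⟩ | ⟨hv, hu⟩⟩ <;> omega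

theorem Fin.injective_castSucc_succ_sym2 (k : ℕ) :
    Function.Injective fun i : Fin k => s(i.castSucc, i.succ) := by
  intro i j h
  simp only [Sym2.eq_iff, Fin.ext_iff, Fin.val_castSucc, Fin.val_succ] at h
  omega

theorem mImp_pathGraph {k n : ℕ} (σ : Fin (k + 1) → Fin n) :
    mImp (SimpleGraph.pathGraph (k + 1)) σ = #{i : Fin k | σ i.castSucc = σ i.succ} := by
  have himage : {e | e ∈ (SimpleGraph.pathGraph (k + 1)).edgeSet ∧ (Sym2.map σ e).IsDiag} =
      (fun i : Fin k => s(i.castSucc, i.succ)) '' {i | σ i.castSucc = σ i.succ} := by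
    ext e
    simp only [SimpleGraph.pathGraph_succ_edgeSet, Set.mem_ofPred_eq, Set.mem_range,
      Set.mem_image]
    constructor
    · rintro ⟨⟨i, rfl⟩, hdiag⟩
      exact ⟨i, by simpa using hdiag, rfl⟩
    · rintro ⟨i, hi, rfl⟩
      exact ⟨⟨i, rfl⟩, by simpa using hi⟩
  calc mImp (SimpleGraph.pathGraph (k + 1)) σ
      = Set.ncard ((fun i : Fin k => s(i.castSucc, i.succ)) '' {i | σ i.castSucc = σ i.succ}) := by
        rw [← himage]; rfl
    _ = _ := by
        rw [Set.ncard_image_of_injective _ (Fin.injective_castSucc_succ_sym2 k),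
          Set.ncard_eq_toFinset_card', Set.toFinset_ofPred]

section HeadDiff

variable {G : Type*} [AddCommGroup G] {k : ℕ}

def Fin.headDiff (σ : Fin (k + 1) → G) : G × (Fin k → G) :=
  (σ 0, fun i => σ i.succ - σ i.castSucc)

theorem Fin.headDiff_injective : Function.Injective (Fin.headDiff : (Fin (k + 1) → G) → _) := by
  intro σ τ h
  obtain ⟨h0, hdiff⟩ := Prod.ext_iff.mp h
  funext j
  induction j using Fin.induction with
  | zero => exact h0
  | succ i ih => simpa [Fin.headDiff, ih] using congrFun hdiff i

theorem Fin.headDiff_bijective [Fintype G] :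
    Function.Bijective (Fin.headDiff : (Fin (k + 1) → G) → _) := by
  classical
  refine (Fintype.bijective_iff_injective_and_card _).mpr ⟨Fin.headDiff_injective, ?_⟩
  simp [Fintype.card_pi, pow_succ, mul_comm]

end HeadDiff

theorem sum_pow_card_filter_eq {ι α R : Type*} [Fintype ι] [DecidableEq ι] [Fintype α]
    [DecidableEq α] [CommSemiring R] (a : α) (x : R) :
    ∑ f : ι → α, x ^ #{i | f i = a} = (x + (Fintype.card α - 1 : ℕ)) ^ Fintype.card ι := by
  have hsum : ∑ b : α, (if b = a then x else 1) = x + (Fintype.card α - 1 : ℕ) := by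
    rw [Finset.sum_ite, Finset.filter_eq', Finset.filter_ne', if_pos (mem_univ a), sum_singleton,
      sum_const, card_erase_of_mem (mem_univ a), card_univ, nsmul_one]
  rw [← hsum, ← Finset.card_univ, ← prod_const, Fintype.prod_sum]
  refine Fintype.sum_congr _ _ fun f => ?_
  rw [Finset.prod_ite, prod_const, prod_const_one, mul_one]

theorem sum_pow_mImp_pathGraph (k n : ℕ) [NeZero n] {R : Type*} [CommSemiring R] (x : R) :
    ∑ σ : Fin (k + 1) → Fin n, x ^ mImp (SimpleGraph.pathGraph (k + 1)) σ =
      n * (x + (n - 1 : ℕ)) ^ k := by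
  calc ∑ σ : Fin (k + 1) → Fin n, x ^ mImp (SimpleGraph.pathGraph (k + 1)) σ
      = ∑ σ : Fin (k + 1) → Fin n, x ^ #{i | (Fin.headDiff σ).2 i = 0} := by
        simp only [mImp_pathGraph, Fin.headDiff, sub_eq_zero, eq_comm]
    _ = ∑ p : Fin n × (Fin k → Fin n), x ^ #{i | p.2 i = 0} :=
        Fin.headDiff_bijective.sum_comp fun p => x ^ #{i | p.2 i = 0}
    _ = n * (x + (n - 1 : ℕ)) ^ k := by
        simp only [Fintype.sum_prod_type, sum_pow_card_filter_eq, sum_const, card_univ,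
          Fintype.card_fin, nsmul_eq_mul]

theorem card_filter_eq_coeff_sum_X_pow {β : Type*} [Fintype β] (f : β → ℕ) (l : ℕ) :
    #{b | f b = l} = (∑ b, (X : ℕ[X]) ^ f b).coeff l := by
  simp only [finsetSum_coeff, coeff_X_pow, sum_boole, Nat.cast_id, eq_comm]

theorem path_graph_impropriety_general (k n l : ℕ) (hn : 1 ≤ n) :
    Nat.card {σ : Fin (k + 1) → Fin n // mImp (SimpleGraph.pathGraph (k + 1)) σ = l} =
      k.choose l * (n - 1) ^ (k - l) * n ∧
    ∀ (R : Type) [CommRing R] (α : R),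
      ∑ σ : Fin (k + 1) → Fin n, α ^ mImp (SimpleGraph.pathGraph (k + 1)) σ =
        ∑ m ∈ Finset.range (k + 1),
          ((k.choose m * (n - 1) ^ (k - m) * n : ℕ) : R) * α ^ m := by
  have : NeZero n := ⟨by omega⟩
  refine ⟨?_, fun R _ α => ?_⟩
  · rw [Nat.card_eq_fintype_card, Fintype.card_subtype, card_filter_eq_coeff_sum_X_pow,
      sum_pow_mImp_pathGraph, ← C_eq_natCast, ← C_eq_natCast, coeff_C_mul, coeff_X_add_C_pow]
    simp only [Nat.cast_id]
    ring
  · rw [sum_pow_mImp_pathGraph, add_pow, mul_sum]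
    refine sum_congr rfl fun m _ => ?_
    push_cast
    ring

/-- For the path graph `G_k` with `k + 1` vertices and `k` edges, the number of
`n`-colorings with exactly `l` improper edges is
`C^l_{G_k}(n) = C(k, l) (n − 1)^{k − l} n`; consequently, weighting each coloring
by `α^{(number of improper edges)}` gives
`Z_{G_k}(α, n) = Σ_{l=0}^{k} C(k, l) (n − 1)^{k − l} n · α^l`. -/
theorem path_graph_impropriety (k n l : ℕ) (hn : 1 ≤ n) (hl : l ≤ k) :
    Nat.card {σ : Fin (k + 1) → Fin n // mImp (SimpleGraph.pathGraph (k + 1)) σ = l} =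
      k.choose l * (n - 1) ^ (k - l) * n ∧
    ∀ (R : Type) [CommRing R] (α : R),
      ∑ σ : Fin (k + 1) → Fin n, α ^ mImp (SimpleGraph.pathGraph (k + 1)) σ =
        ∑ m ∈ Finset.range (k + 1),
          ((k.choose m * (n - 1) ^ (k - m) * n : ℕ) : R) * α ^ m :=
  path_graph_impropriety_general k n l hn
end
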